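/- Let u solve the Navier-Stokes equations on the half-space Ω = ℝ² × (0,∞) with Navier boundary conditions u₃ = 0 and ∂_z u_h = 2α u_h at z = 0, ∇·u = 0. Define ω = curl u and η = ω_h − 2α u_h^⊥, where u_h^⊥ = (−u₂, u₁). Then η vanishes on the boundary {z = 0}, and η solves ∂ₜη + u·∇η − εΔη = ω·∇u_h + 2α∇_h^⊥ p in Ω. -/

import Mathlib

open MeasureTheory

abbrev R3 := Fin 3 → ℝ

noncomputable def pd (i : Fin 3) (f : R3 → ℝ) (x : R3) : ℝ := fderiv ℝ f x (Pi.single i 1)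

noncomputable def lap (f : R3 → ℝ) (x : R3) : ℝ := ∑ i : Fin 3, pd i (pd i f) x

/-- Vorticity `ω = curl u` of a (time-dependent) velocity field. -/
noncomputable def vort (u : ℝ → R3 → Fin 3 → ℝ) (t : ℝ) (x : R3) : Fin 3 → ℝ :=
  ![pd 1 (fun y => u t y 2) x - pd 2 (fun y => u t y 1) x,
    pd 2 (fun y => u t y 0) x - pd 0 (fun y => u t y 2) x,
    pd 0 (fun y => u t y 1) x - pd 1 (fun y => u t y 0) x]

/-- `η = ω_h - 2α u_h^⊥` where `u_h^⊥ = (-u₂, u₁)`. -/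
noncomputable def etaF (α : ℝ) (u : ℝ → R3 → Fin 3 → ℝ) (t : ℝ) (x : R3) : Fin 2 → ℝ :=
  ![vort u t x 0 - 2 * α * (-(u t x 1)), vort u t x 1 - 2 * α * (u t x 0)]

/-! ### Auxiliary infrastructure -/

abbrev EE := ℝ × R3

/-- Directional derivative operator on space-time. -/
noncomputable def dd (v : EE) (F : EE → ℝ) : EE → ℝ := fun q => fderiv ℝ F q v

abbrev UF (u : ℝ → R3 → Fin 3 → ℝ) (i : Fin 3) : EE → ℝ := fun q => u q.1 q.2 i
abbrev PF (p : ℝ → R3 → ℝ) : EE → ℝ := fun q => p q.1 q.2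
abbrev sd (j : Fin 3) : EE := ((0 : ℝ), Pi.single j 1)
abbrev td : EE := ((1 : ℝ), (0 : R3))

theorem dd_smooth {F : EE → ℝ} (hF : ContDiff ℝ (⊤ : ℕ∞) F) (v : EE) : ContDiff ℝ (⊤ : ℕ∞) (dd v F) :=
  (hF.fderiv_right (m := (⊤ : ℕ∞)) (by simp)).clm_apply contDiff_const

theorem dd_comm {F : EE → ℝ} (hF : ContDiff ℝ (⊤ : ℕ∞) F) (v w : EE) :
    dd v (dd w F) = dd w (dd v F) := by
  funext q
  have hdF : ContDiff ℝ (⊤ : ℕ∞) (fderiv ℝ F) := hF.fderiv_right (m := (⊤ : ℕ∞)) (by simp)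
  have key : ∀ z : EE, fderiv ℝ (fun q' => fderiv ℝ F q' z) q
      = ((fderiv ℝ (fderiv ℝ F) q).flip z) := by
    intro z
    have := fderiv_clm_apply (x := q) (c := fderiv ℝ F) (u := fun _ => z)
      (hdF.differentiable (by simp)).differentiableAt (differentiableAt_const z)
    simpa [fderiv_fun_const] using this
  have hsymm := second_derivative_symmetric (f := F) (f' := fderiv ℝ F)
    (f'' := fderiv ℝ (fderiv ℝ F) q)
    (fun y => (hF.differentiable (by simp) y).hasFDerivAt)
    ((hdF.differentiable (by simp) q).hasFDerivAt) v w
  show fderiv ℝ (dd w F) q v = fderiv ℝ (dd v F) q w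
  unfold dd
  rw [key w, key v]
  simpa using hsymm

theorem pd_eq {F : EE → ℝ} (hF : ContDiff ℝ (⊤ : ℕ∞) F) (j : Fin 3) (t : ℝ) (x : R3) :
    pd j (fun y => F (t, y)) x = dd (sd j) F (t, x) := by
  have h1 : HasFDerivAt (fun y : R3 => (t, y))
      (ContinuousLinearMap.inr ℝ ℝ R3) x := hasFDerivAt_prodMk_right t x
  have h2 : HasFDerivAt F (fderiv ℝ F (t, x)) (t, x) :=
    (hF.differentiable (by simp) (t, x)).hasFDerivAt
  have h3 := (h2.comp x h1).fderiv
  show fderiv ℝ (fun y => F (t, y)) x (Pi.single j 1) = _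
  have heq : (fun y => F (t, y)) = F ∘ Prod.mk t := rfl
  rw [heq, h3]
  rfl

theorem derivt_eq {F : EE → ℝ} (hF : ContDiff ℝ (⊤ : ℕ∞) F) (t : ℝ) (x : R3) :
    deriv (fun s => F (s, x)) t = dd td F (t, x) := by
  have h1 : HasFDerivAt (fun s : ℝ => (s, x))
      (ContinuousLinearMap.inl ℝ ℝ R3) t := hasFDerivAt_prodMk_left t x
  have h2 : HasFDerivAt F (fderiv ℝ F (t, x)) (t, x) :=
    (hF.differentiable (by simp) (t, x)).hasFDerivAt
  have h3 := (h2.comp t h1).hasDerivAt.deriv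
  have heq : (fun s => F (s, x)) = F ∘ fun s => (s, x) := rfl
  rw [heq, h3]
  rfl

theorem ddEta {A B C : EE → ℝ} (hA : ContDiff ℝ (⊤ : ℕ∞) A) (hB : ContDiff ℝ (⊤ : ℕ∞) B)
    (hC : ContDiff ℝ (⊤ : ℕ∞) C) (c : ℝ) (v : EE) :
    dd v (fun q => A q - B q + c * C q)
      = fun q => dd v A q - dd v B q + c * dd v C q := by
  funext q
  have hA' := (hA.differentiable (by simp) q).hasFDerivAt
  have hB' := (hB.differentiable (by simp) q).hasFDerivAt
  have hC' := (hC.differentiable (by simp) q).hasFDerivAt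
  have hh := (hA'.sub hB').add (hC'.const_mul c)
  have h3 := congrFun (congrArg DFunLike.coe hh.fderiv) v
  simp only [ContinuousLinearMap.add_apply, ContinuousLinearMap.sub_apply,
    ContinuousLinearMap.smul_apply, smul_eq_mul] at h3
  show fderiv ℝ _ q v = _
  exact h3

theorem ddN {F Q0 Q1 Q2 B0 B1 B2 Pq L0 L1 L2 : EE → ℝ}
    (hF : ContDiff ℝ (⊤ : ℕ∞) F) (hQ0 : ContDiff ℝ (⊤ : ℕ∞) Q0) (hQ1 : ContDiff ℝ (⊤ : ℕ∞) Q1)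
    (hQ2 : ContDiff ℝ (⊤ : ℕ∞) Q2) (hB0 : ContDiff ℝ (⊤ : ℕ∞) B0) (hB1 : ContDiff ℝ (⊤ : ℕ∞) B1)
    (hB2 : ContDiff ℝ (⊤ : ℕ∞) B2) (hP : ContDiff ℝ (⊤ : ℕ∞) Pq) (hL0 : ContDiff ℝ (⊤ : ℕ∞) L0)
    (hL1 : ContDiff ℝ (⊤ : ℕ∞) L1) (hL2 : ContDiff ℝ (⊤ : ℕ∞) L2) (ε : ℝ) (v : EE) :
    dd v (fun q => F q + (Q0 q * B0 q + Q1 q * B1 q + Q2 q * B2 q) + Pq q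
        - ε * (L0 q + L1 q + L2 q))
      = fun q => dd v F q
          + ((Q0 q * dd v B0 q + dd v Q0 q * B0 q)
            + (Q1 q * dd v B1 q + dd v Q1 q * B1 q)
            + (Q2 q * dd v B2 q + dd v Q2 q * B2 q))
          + dd v Pq q
          - ε * (dd v L0 q + dd v L1 q + dd v L2 q) := by
  funext q
  have hF' := (hF.differentiable (by simp) q).hasFDerivAt
  have hQ0' := (hQ0.differentiable (by simp) q).hasFDerivAt
  have hQ1' := (hQ1.differentiable (by simp) q).hasFDerivAt
  have hQ2' := (hQ2.differentiable (by simp) q).hasFDerivAt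
  have hB0' := (hB0.differentiable (by simp) q).hasFDerivAt
  have hB1' := (hB1.differentiable (by simp) q).hasFDerivAt
  have hB2' := (hB2.differentiable (by simp) q).hasFDerivAt
  have hP' := (hP.differentiable (by simp) q).hasFDerivAt
  have hL0' := (hL0.differentiable (by simp) q).hasFDerivAt
  have hL1' := (hL1.differentiable (by simp) q).hasFDerivAt
  have hL2' := (hL2.differentiable (by simp) q).hasFDerivAt
  have hh := ((hF'.add (((hQ0'.mul hB0').add (hQ1'.mul hB1')).add (hQ2'.mul hB2'))).add
    hP').sub (((hL0'.add hL1').add hL2').const_mul ε)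
  have h3 := congrFun (congrArg DFunLike.coe hh.fderiv) v
  simp only [ContinuousLinearMap.add_apply, ContinuousLinearMap.sub_apply,
    ContinuousLinearMap.smul_apply, ContinuousLinearMap.smulRight_apply,
    smul_eq_mul] at h3
  show fderiv ℝ _ q v = _
  refine h3.trans ?_
  simp only [dd]
  ring

/-- The function `η` expressed on space-time. -/
noncomputable def GG (u : ℝ → R3 → Fin 3 → ℝ) (a b c : Fin 3) (co : ℝ) : EE → ℝ :=
  fun q => dd (sd a) (UF u b) q - dd (sd b) (UF u a) q + co * UF u c q

theorem GG_smooth {u : ℝ → R3 → Fin 3 → ℝ}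
    (hu : ∀ i, ContDiff ℝ (⊤ : ℕ∞) (fun q : EE => u q.1 q.2 i)) (a b c : Fin 3) (co : ℝ) :
    ContDiff ℝ (⊤ : ℕ∞) (GG u a b c co) :=
  ((dd_smooth (hu b) (sd a)).sub (dd_smooth (hu a) (sd b))).add
    (contDiff_const.mul (hu c))

theorem dd_GG {u : ℝ → R3 → Fin 3 → ℝ}
    (hu : ∀ i, ContDiff ℝ (⊤ : ℕ∞) (fun q : EE => u q.1 q.2 i)) (a b c : Fin 3) (co : ℝ) (v : EE) :
    dd v (GG u a b c co)
      = fun q => dd v (dd (sd a) (UF u b)) q - dd v (dd (sd b) (UF u a)) q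
          + co * dd v (UF u c) q :=
  ddEta (dd_smooth (hu b) (sd a)) (dd_smooth (hu a) (sd b)) (hu c) co v

theorem dd_GG2 {u : ℝ → R3 → Fin 3 → ℝ}
    (hu : ∀ i, ContDiff ℝ (⊤ : ℕ∞) (fun q : EE => u q.1 q.2 i)) (a b c : Fin 3) (co : ℝ) (v w : EE) :
    dd v (fun q => dd w (dd (sd a) (UF u b)) q - dd w (dd (sd b) (UF u a)) q
        + co * dd w (UF u c) q)
      = fun q => dd v (dd w (dd (sd a) (UF u b))) q - dd v (dd w (dd (sd b) (UF u a))) q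
          + co * dd v (dd w (UF u c)) q :=
  ddEta (dd_smooth (dd_smooth (hu b) (sd a)) w) (dd_smooth (dd_smooth (hu a) (sd b)) w)
    (dd_smooth (hu c) w) co v

/-- The Navier-Stokes operator on space-time, in directional-derivative form. -/
noncomputable def NN (ε : ℝ) (u : ℝ → R3 → Fin 3 → ℝ) (p : ℝ → R3 → ℝ) (i : Fin 3) :
    EE → ℝ :=
  fun q => dd td (UF u i) q
    + (UF u 0 q * dd (sd 0) (UF u i) q + UF u 1 q * dd (sd 1) (UF u i) q
      + UF u 2 q * dd (sd 2) (UF u i) q)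
    + dd (sd i) (PF p) q
    - ε * (dd (sd 0) (dd (sd 0) (UF u i)) q + dd (sd 1) (dd (sd 1) (UF u i)) q
      + dd (sd 2) (dd (sd 2) (UF u i)) q)

theorem dd_NN {u : ℝ → R3 → Fin 3 → ℝ} {p : ℝ → R3 → ℝ}
    (hu : ∀ i, ContDiff ℝ (⊤ : ℕ∞) (fun q : EE => u q.1 q.2 i))
    (hp : ContDiff ℝ (⊤ : ℕ∞) (fun q : EE => p q.1 q.2)) (ε : ℝ) (i : Fin 3) (v : EE) :
    dd v (NN ε u p i)
      = fun q => dd v (dd td (UF u i)) q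
          + ((UF u 0 q * dd v (dd (sd 0) (UF u i)) q + dd v (UF u 0) q * dd (sd 0) (UF u i) q)
            + (UF u 1 q * dd v (dd (sd 1) (UF u i)) q + dd v (UF u 1) q * dd (sd 1) (UF u i) q)
            + (UF u 2 q * dd v (dd (sd 2) (UF u i)) q + dd v (UF u 2) q * dd (sd 2) (UF u i) q))
          + dd v (dd (sd i) (PF p)) q
          - ε * (dd v (dd (sd 0) (dd (sd 0) (UF u i))) q
            + dd v (dd (sd 1) (dd (sd 1) (UF u i))) q
            + dd v (dd (sd 2) (dd (sd 2) (UF u i))) q) :=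
  ddN (dd_smooth (hu i) td) (hu 0) (hu 1) (hu 2)
    (dd_smooth (hu i) (sd 0)) (dd_smooth (hu i) (sd 1)) (dd_smooth (hu i) (sd 2))
    (dd_smooth hp (sd i))
    (dd_smooth (dd_smooth (hu i) (sd 0)) (sd 0))
    (dd_smooth (dd_smooth (hu i) (sd 1)) (sd 1))
    (dd_smooth (dd_smooth (hu i) (sd 2)) (sd 2)) ε v

theorem pd_tangent_zero (f : R3 → ℝ) (x : R3) (hx : x 2 = 0) (j : Fin 3)
    (hj : (2 : Fin 3) ≠ j) (hf : DifferentiableAt ℝ f x)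
    (h0 : ∀ y : R3, y 2 = 0 → f y = 0) : pd j f x = 0 := by
  have hγ : HasDerivAt (fun s : ℝ => x + s • (Pi.single j 1 : R3))
      (Pi.single j 1 : R3) 0 := by
    simpa using ((hasDerivAt_id (0 : ℝ)).smul_const (Pi.single j 1 : R3)).const_add x
  have hfx : HasFDerivAt f (fderiv ℝ f x) (x + (0 : ℝ) • (Pi.single j 1 : R3)) := by
    simpa using hf.hasFDerivAt
  have h1 : HasDerivAt (fun s : ℝ => f (x + s • (Pi.single j 1 : R3)))
      (fderiv ℝ f x (Pi.single j 1)) 0 := by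
    have := hfx.comp_hasDerivAt 0 hγ
    exact this
  have hcomp : (fun s : ℝ => f (x + s • (Pi.single j 1 : R3))) = fun _ => 0 := by
    funext s
    apply h0
    simp [hx, Pi.single_eq_of_ne hj]
  rw [hcomp] at h1
  have h2 : HasDerivAt (fun _ : ℝ => (0 : ℝ)) (0 : ℝ) 0 := hasDerivAt_const 0 0
  show fderiv ℝ f x (Pi.single j 1) = 0
  exact h1.unique h2

/-- For a solution of Navier-Stokes on the half-space with Navier boundary conditions,
the quantity `η = ω_h - 2α u_h^⊥` vanishes on the boundary `{z = 0}` and solves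
`∂ₜη + u·∇η - εΔη = ω·∇u_h + 2α∇_h^⊥ p`. -/
theorem eta_boundary_and_equation
    (u : ℝ → R3 → Fin 3 → ℝ) (p : ℝ → R3 → ℝ) (ε α : ℝ) (hε : 0 < ε)
    (hsm : ∀ i, ContDiff ℝ (⊤ : ℕ∞) (fun q : ℝ × R3 => u q.1 q.2 i))
    (hpsm : ContDiff ℝ (⊤ : ℕ∞) (fun q : ℝ × R3 => p q.1 q.2))
    -- Navier-Stokes on the half-space {x 2 > 0}
    (hNS : ∀ t, ∀ x : R3, 0 < x 2 → ∀ i : Fin 3,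
      deriv (fun s => u s x i) t + (∑ j : Fin 3, u t x j * pd j (fun y => u t y i) x)
        + pd i (p t) x = ε * lap (fun y => u t y i) x)
    (hdiv : ∀ t, ∀ x : R3, 0 ≤ x 2 → (∑ i : Fin 3, pd i (fun y => u t y i) x) = 0)
    -- Navier boundary conditions: u₃ = 0 and ∂_z u_h = 2α u_h at z = 0
    (hbc1 : ∀ t, ∀ x : R3, x 2 = 0 → u t x 2 = 0)
    (hbc2 : ∀ t, ∀ x : R3, x 2 = 0 → ∀ i : Fin 2,
      pd 2 (fun y => u t y i.castSucc) x = 2 * α * u t x i.castSucc) :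
    -- η vanishes on the boundary
    (∀ t, ∀ x : R3, x 2 = 0 → ∀ i : Fin 2, etaF α u t x i = 0) ∧
    -- η solves the transport-diffusion equation with source ω·∇u_h + 2α∇_h^⊥ p
    (∀ t, ∀ x : R3, 0 < x 2 → ∀ i : Fin 2,
      deriv (fun s => etaF α u s x i) t
        + (∑ j : Fin 3, u t x j * pd j (fun y => etaF α u t y i) x)
        - ε * lap (fun y => etaF α u t y i) x
      = (∑ j : Fin 3, vort u t x j * pd j (fun y => u t y i.castSucc) x)
        + 2 * α * (if i = 0 then -(pd 1 (p t) x) else pd 0 (p t) x)) := by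
  have hu : ∀ i, ContDiff ℝ (⊤ : ℕ∞) (fun q : EE => u q.1 q.2 i) := hsm
  have hp : ContDiff ℝ (⊤ : ℕ∞) (fun q : EE => p q.1 q.2) := hpsm
  constructor
  · -- boundary part
    intro t x hx i
    have hdf : DifferentiableAt ℝ (fun y : R3 => u t y 2) x := by
      have : ContDiff ℝ (⊤ : ℕ∞) (fun y : R3 => u t y 2) :=
        (hu 2).comp (contDiff_const.prodMk contDiff_id)
      exact (this.differentiable (by simp)).differentiableAt
    have htang : ∀ j : Fin 3, (2 : Fin 3) ≠ j → pd j (fun y => u t y 2) x = 0 :=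
      fun j hj => pd_tangent_zero _ x hx j hj hdf (fun y hy => hbc1 t y hy)
    have hb0 := hbc2 t x hx 0
    have hb1 := hbc2 t x hx 1
    simp only [Fin.castSucc_zero, Fin.castSucc_one] at hb0 hb1
    fin_cases i
    · show etaF α u t x 0 = 0
      simp only [etaF, vort, Matrix.cons_val_zero, Matrix.cons_val_one, Matrix.head_cons]
      rw [htang 1 (by decide), hb1]
      ring
    · show etaF α u t x 1 = 0
      simp only [etaF, vort, Matrix.cons_val_zero, Matrix.cons_val_one, Matrix.head_cons]
      rw [htang 0 (by decide), hb0]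
      ring
  · -- interior equation
    intro t x hx i
    -- conversion lemmas
    have hu_eq : ∀ (j k : Fin 3) (t' : ℝ) (x' : R3),
        pd j (fun y => u t' y k) x' = dd (sd j) (UF u k) (t', x') :=
      fun j k t' x' => pd_eq (hu k) j t' x'
    have hp_eq : ∀ (j : Fin 3) (t' : ℝ) (x' : R3),
        pd j (p t') x' = dd (sd j) (PF p) (t', x') :=
      fun j t' x' => pd_eq hp j t' x'
    have hinner : ∀ (k kk : Fin 3) (t' : ℝ),
        pd k (fun y => u t' y kk) = fun x' => dd (sd k) (UF u kk) (t', x') :=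
      fun k kk t' => funext fun x' => hu_eq k kk t' x'
    have hdd2 : ∀ (k k' kk : Fin 3) (t' : ℝ) (x' : R3),
        pd k (fun y => dd (sd k') (UF u kk) (t', y)) x'
          = dd (sd k) (dd (sd k') (UF u kk)) (t', x') :=
      fun k k' kk t' x' => pd_eq (dd_smooth (hu kk) (sd k')) k t' x'
    -- the NS operator vanishes on the open half-space
    have hNz : ∀ (i' : Fin 3) (q : EE), 0 < q.2 2 → NN ε u p i' q = 0 := by
      intro i' q hq
      have h := hNS q.1 q.2 hq i'
      have hder : deriv (fun s => u s q.2 i') q.1 = dd td (UF u i') (q.1, q.2) :=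
        derivt_eq (hu i') q.1 q.2
      simp only [lap, Fin.sum_univ_three] at h
      rw [hder] at h
      simp only [hu_eq, hinner, hdd2, hp_eq] at h
      show NN ε u p i' q = 0
      simp only [NN]
      linear_combination h
    have hopen : IsOpen {q : EE | 0 < q.2 2} :=
      isOpen_lt continuous_const ((continuous_apply (2 : Fin 3)).comp continuous_snd)
    have hNd : ∀ (i' : Fin 3) (w : EE), dd w (NN ε u p i') (t, x) = 0 := by
      intro i' w
      have hev : NN ε u p i' =ᶠ[nhds (t, x)] fun _ => (0 : ℝ) :=
        Filter.eventuallyEq_of_mem (hopen.mem_nhds hx) (fun q hq => hNz i' q hq)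
      show fderiv ℝ (NN ε u p i') (t, x) w = 0
      rw [hev.fderiv_eq]
      simp
    have hdv : dd (sd 0) (UF u 0) (t, x) + dd (sd 1) (UF u 1) (t, x)
        + dd (sd 2) (UF u 2) (t, x) = 0 := by
      have h := hdiv t x hx.le
      simp only [Fin.sum_univ_three] at h
      simp only [hu_eq] at h
      exact h
    fin_cases i
    · -- i = 0 : η₀ = ∂₁u₂ - ∂₂u₁ + 2α u₁
      have hEta : ∀ (s : ℝ) (y : R3), etaF α u s y 0 = GG u 1 2 1 (2 * α) (s, y) := by
        intro s y
        simp only [etaF, vort, Matrix.cons_val_zero, Matrix.cons_val_one, Matrix.head_cons,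
          GG]
        rw [hu_eq 1 2 s y, hu_eq 2 1 s y]
        show _ = _ - _ + 2 * α * u s y 1
        ring
      have hGs : ContDiff ℝ (⊤ : ℕ∞) (GG u 1 2 1 (2 * α)) := GG_smooth hu 1 2 1 (2 * α)
      have hpdG : ∀ (j : Fin 3) (x' : R3),
          pd j (fun y => GG u 1 2 1 (2 * α) (t, y)) x'
            = dd (sd j) (GG u 1 2 1 (2 * α)) (t, x') :=
        fun j x' => pd_eq hGs j t x'
      have hpdG1 : ∀ j : Fin 3,
          pd j (fun y => GG u 1 2 1 (2 * α) (t, y))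
            = fun x' => dd (sd j) (GG u 1 2 1 (2 * α)) (t, x') :=
        fun j => funext fun x' => hpdG j x'
      have hpdG2 : ∀ (k k' : Fin 3) (x' : R3),
          pd k (fun y => dd (sd k') (GG u 1 2 1 (2 * α)) (t, y)) x'
            = dd (sd k) (dd (sd k') (GG u 1 2 1 (2 * α))) (t, x') :=
        fun k k' x' => pd_eq (dd_smooth hGs (sd k')) k t x'
      simp only [Fin.zero_eta, Fin.isValue, Fin.castSucc_zero]
      rw [show (fun s => etaF α u s x 0) = (fun s => GG u 1 2 1 (2 * α) (s, x)) from
        funext fun s => hEta s x]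
      rw [show (fun y => etaF α u t y 0) = (fun y => GG u 1 2 1 (2 * α) (t, y)) from
        funext fun y => hEta t y]
      rw [derivt_eq hGs t x]
      simp only [lap, Fin.sum_univ_three, vort, Matrix.cons_val_zero, Matrix.cons_val_one,
        Matrix.head_cons, Matrix.cons_val_two, Matrix.tail_cons]
      simp only [hpdG, hpdG1, hpdG2, hu_eq, hp_eq]
      simp only [reduceIte]
      -- expand η-derivatives
      simp only [dd_GG hu, dd_GG2 hu]
      -- NS relations
      have hA := (congrFun (dd_NN hu hp ε 2 (sd 1)) (t, x)).symm.trans (hNd 2 (sd 1))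
      have hB := (congrFun (dd_NN hu hp ε 1 (sd 2)) (t, x)).symm.trans (hNd 1 (sd 2))
      have hC := hNz 1 (t, x) hx
      simp only [NN] at hC
      -- normalize mixed partials: pressure in hB
      rw [dd_comm hp (sd 2) (sd 1)] at hB
      -- normalize mixed partials in the goal
      rw [dd_comm (hu 2) td (sd 1), dd_comm (hu 1) td (sd 2),
        dd_comm (hu 2) (sd 0) (sd 1), dd_comm (hu 2) (sd 2) (sd 1),
        dd_comm (hu 1) (sd 0) (sd 2), dd_comm (hu 1) (sd 1) (sd 2),
        dd_comm (dd_smooth (hu 2) (sd 0)) (sd 0) (sd 1),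
        dd_comm (dd_smooth (hu 2) (sd 2)) (sd 2) (sd 1),
        dd_comm (dd_smooth (hu 1) (sd 0)) (sd 0) (sd 2),
        dd_comm (dd_smooth (hu 1) (sd 1)) (sd 1) (sd 2)]
      linear_combination hA - hB + 2 * α * hC
        - (dd (sd 1) (UF u 2) (t, x) - dd (sd 2) (UF u 1) (t, x)) * hdv
    · -- i = 1 : η₁ = ∂₂u₀ - ∂₀u₂ - 2α u₀
      have hEta : ∀ (s : ℝ) (y : R3), etaF α u s y 1 = GG u 2 0 0 (-(2 * α)) (s, y) := by
        intro s y
        simp only [etaF, vort, Matrix.cons_val_zero, Matrix.cons_val_one, Matrix.head_cons,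
          GG]
        rw [hu_eq 2 0 s y, hu_eq 0 2 s y]
        show _ = _ - _ + -(2 * α) * u s y 0
        ring
      have hGs : ContDiff ℝ (⊤ : ℕ∞) (GG u 2 0 0 (-(2 * α))) := GG_smooth hu 2 0 0 (-(2 * α))
      have hpdG : ∀ (j : Fin 3) (x' : R3),
          pd j (fun y => GG u 2 0 0 (-(2 * α)) (t, y)) x'
            = dd (sd j) (GG u 2 0 0 (-(2 * α))) (t, x') :=
        fun j x' => pd_eq hGs j t x'
      have hpdG1 : ∀ j : Fin 3,
          pd j (fun y => GG u 2 0 0 (-(2 * α)) (t, y))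
            = fun x' => dd (sd j) (GG u 2 0 0 (-(2 * α))) (t, x') :=
        fun j => funext fun x' => hpdG j x'
      have hpdG2 : ∀ (k k' : Fin 3) (x' : R3),
          pd k (fun y => dd (sd k') (GG u 2 0 0 (-(2 * α))) (t, y)) x'
            = dd (sd k) (dd (sd k') (GG u 2 0 0 (-(2 * α)))) (t, x') :=
        fun k k' x' => pd_eq (dd_smooth hGs (sd k')) k t x'
      simp only [Fin.mk_one, Fin.isValue, Fin.castSucc_one]
      rw [show (fun s => etaF α u s x 1) = (fun s => GG u 2 0 0 (-(2 * α)) (s, x)) from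
        funext fun s => hEta s x]
      rw [show (fun y => etaF α u t y 1) = (fun y => GG u 2 0 0 (-(2 * α)) (t, y)) from
        funext fun y => hEta t y]
      rw [derivt_eq hGs t x]
      simp only [lap, Fin.sum_univ_three, vort, Matrix.cons_val_zero, Matrix.cons_val_one,
        Matrix.head_cons, Matrix.cons_val_two, Matrix.tail_cons]
      simp only [hpdG, hpdG1, hpdG2, hu_eq, hp_eq]
      simp only [if_neg (by decide : ¬(1 : Fin 2) = 0)]
      simp only [dd_GG hu, dd_GG2 hu]
      have hA := (congrFun (dd_NN hu hp ε 0 (sd 2)) (t, x)).symm.trans (hNd 0 (sd 2))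
      have hB := (congrFun (dd_NN hu hp ε 2 (sd 0)) (t, x)).symm.trans (hNd 2 (sd 0))
      have hC := hNz 0 (t, x) hx
      simp only [NN] at hC
      rw [dd_comm hp (sd 0) (sd 2)] at hB
      rw [dd_comm (hu 0) td (sd 2), dd_comm (hu 2) td (sd 0),
        dd_comm (hu 0) (sd 0) (sd 2), dd_comm (hu 0) (sd 1) (sd 2),
        dd_comm (hu 2) (sd 1) (sd 0), dd_comm (hu 2) (sd 2) (sd 0),
        dd_comm (dd_smooth (hu 0) (sd 0)) (sd 0) (sd 2),
        dd_comm (dd_smooth (hu 0) (sd 1)) (sd 1) (sd 2),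
        dd_comm (dd_smooth (hu 2) (sd 1)) (sd 1) (sd 0),
        dd_comm (dd_smooth (hu 2) (sd 2)) (sd 2) (sd 0)]
      linear_combination hA - hB - 2 * α * hC
        - (dd (sd 2) (UF u 0) (t, x) - dd (sd 0) (UF u 2) (t, x)) * hdv
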